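/- For every 1-free star expression r ∈ StExp, the inclusion map ⟨r⟩ ↪ StExp of the subchart of the syntactic chart generated by r is a solution to ⟨r⟩. Equivalently, for every s ∈ ⟨r⟩ with δ(s) = {(a1, s1), …, (an, sn), (b1, ✓), …, (bm, ✓)}, one has SL* ⊢ s = a1·s1 + ⋯ + an·sn + b1 + ⋯ + bm. -/

import Mathlib

/-- A chart over action alphabet `Act` with state space `X`: each state is assigned a
finite set of transitions, either `(a, none)` (i.e. `x →a ✓`) or `(a, some y)` (i.e. `x →a y`). -/
structure Chart (Act X : Type) where
  tr : X → Finset (Act × Option X)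

/-- `x →a ✓` in the chart `C`. -/
def Chart.Halts {Act X : Type} (C : Chart Act X) (x : X) : Prop :=
  ∃ a : Act, (a, (none : Option X)) ∈ C.tr x

/-- `x → y` (for some action) in the chart `C`. -/
def Chart.StepRel {Act X : Type} (C : Chart Act X) (x y : X) : Prop :=
  ∃ a : Act, (a, some y) ∈ C.tr x

/-- `R` is a bisimulation between the charts `C` and `D`. -/
def IsBisim {Act X Y : Type} (C : Chart Act X) (D : Chart Act Y) (R : X → Y → Prop) : Prop :=
  ∀ x y, R x y → ∀ a : Act,
    (((a, (none : Option X)) ∈ C.tr x) ↔ ((a, (none : Option Y)) ∈ D.tr y)) ∧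
    (∀ x', (a, some x') ∈ C.tr x → ∃ y', (a, some y') ∈ D.tr y ∧ R x' y') ∧
    (∀ y', (a, some y') ∈ D.tr y → ∃ x', (a, some x') ∈ C.tr x ∧ R x' y')

/-- States `x` of `C` and `y` of `D` are bisimilar. -/
def Bisimilar {Act X Y : Type} (C : Chart Act X) (D : Chart Act Y) (x : X) (y : Y) : Prop :=
  ∃ R, IsBisim C D R ∧ R x y

/-- A chart homomorphism is a function whose graph is a bisimulation. -/
def IsChartHom {Act X Y : Type} (C : Chart Act X) (D : Chart Act Y) (h : X → Y) : Prop :=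
  IsBisim C D (fun x y => h x = y)

/-- 1-free star expressions over the alphabet `Act`. -/
inductive StExp (Act : Type) : Type where
  | zero : StExp Act
  | act : Act → StExp Act
  | add : StExp Act → StExp Act → StExp Act
  | mul : StExp Act → StExp Act → StExp Act
  | star : StExp Act → StExp Act → StExp Act
deriving DecidableEq

/-- Continuation after a transition of the left operand: `✓` continues as `s`,
and a state `t` continues as `t·s`. -/
def StExp.seqAfter {Act : Type} (s : StExp Act) : Option (StExp Act) → StExp Act
  | none => s
  | some t => t.mul s

/-- The transition function of the syntactic chart, following Antimirov-style rules. -/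
def StExp.tr {Act : Type} [DecidableEq Act] : StExp Act → Finset (Act × Option (StExp Act))
  | .zero => ∅
  | .act a => {(a, none)}
  | .add r s => r.tr ∪ s.tr
  | .mul r s => r.tr.image (fun p => (p.1, some (StExp.seqAfter s p.2)))
  | .star r s =>
      (r.tr.image (fun p => (p.1, some (StExp.seqAfter (StExp.star r s) p.2)))) ∪ s.tr

/-- The syntactic chart `(StExp, δ)`. -/
def synChart (Act : Type) [DecidableEq Act] : Chart Act (StExp Act) := ⟨StExp.tr⟩

/-- Derivability `SL* ⊢ r = s` from Grabmayer and Fokkink's axioms together with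
the laws of equational logic. -/
inductive SLEq {Act : Type} : StExp Act → StExp Act → Prop where
  | add_comm (x y : StExp Act) : SLEq (x.add y) (y.add x)
  | add_assoc (x y z : StExp Act) : SLEq ((x.add y).add z) (x.add (y.add z))
  | add_idem (x : StExp Act) : SLEq (x.add x) x
  | add_zero (x : StExp Act) : SLEq (x.add .zero) x
  | right_distrib (x y z : StExp Act) : SLEq ((x.add y).mul z) ((x.mul z).add (y.mul z))
  | mul_assoc (x y z : StExp Act) : SLEq ((x.mul y).mul z) (x.mul (y.mul z))
  | zero_mul (x : StExp Act) : SLEq (StExp.zero.mul x) .zero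
  | star_unfold (x y : StExp Act) : SLEq (x.star y) ((x.mul (x.star y)).add y)
  | fixpoint {x y z : StExp Act} : SLEq x ((y.mul x).add z) → SLEq x (y.star z)
  | refl (x : StExp Act) : SLEq x x
  | symm {x y : StExp Act} : SLEq x y → SLEq y x
  | trans {x y z : StExp Act} : SLEq x y → SLEq y z → SLEq x z
  | add_congr {x x' y y' : StExp Act} : SLEq x x' → SLEq y y' → SLEq (x.add y) (x'.add y')
  | mul_congr {x x' y y' : StExp Act} : SLEq x x' → SLEq y y' → SLEq (x.mul y) (x'.mul y')
  | star_congr {x x' y y' : StExp Act} : SLEq x x' → SLEq y y' → SLEq (x.star y) (x'.star y')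

/-- The expression associated to a single transition under a map `φ`:
`(a, ✓)` yields `a` and `(a, some x)` yields `a·φ(x)`. -/
def pairExp {Act X : Type} (φ : X → StExp Act) : Act × Option X → StExp Act
  | (a, none) => .act a
  | (a, some x) => (StExp.act a).mul (φ x)

/-- The sum `e1 + ⋯ + en` of a list of expressions (the empty sum is `0`). -/
def listSum {Act : Type} : List (StExp Act) → StExp Act :=
  fun l => l.foldr StExp.add StExp.zero

/-- `φ` is a solution to the chart `C`: for each state `x` with
`δ(x) = {(a1,x1),…,(an,xn),(b1,✓),…,(bm,✓)}` we have
`SL* ⊢ φ(x) = a1·φ(x1) + ⋯ + an·φ(xn) + b1 + ⋯ + bm`. -/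
def IsSolution {Act X : Type} (C : Chart Act X) (φ : X → StExp Act) : Prop :=
  ∀ x : X, SLEq (φ x) (listSum (((C.tr x).toList).map (pairExp φ)))

/- By structural induction, every expression is SL*-provably the sum of its own transitions: the
star case is the unfolding axiom `x*y = x(x*y) + y`, and the other cases are right
distributivity together with the fact that, up to ACI of `+`, the sum of a list depends only on
its set of members. -/

namespace SLEq

variable {Act : Type}

instance : HasEquiv (StExp Act) := ⟨SLEq⟩

instance : Trans (α := StExp Act) (· ≈ ·) (· ≈ ·) (· ≈ ·) := ⟨SLEq.trans⟩

lemma zero_add (x : StExp Act) : SLEq (StExp.zero.add x) x :=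
  (add_comm _ _).trans (add_zero x)

lemma add_left_comm (x y z : StExp Act) : SLEq (x.add (y.add z)) (y.add (x.add z)) :=
  calc x.add (y.add z)
    _ ≈ (x.add y).add z := (add_assoc x y z).symm
    _ ≈ (y.add x).add z := add_congr (add_comm x y) (refl z)
    _ ≈ y.add (x.add z) := add_assoc y x z

end SLEq

section listSum

variable {Act : Type}

open SLEq

lemma listSum_append (l₁ l₂ : List (StExp Act)) :
    SLEq (listSum (l₁ ++ l₂)) ((listSum l₁).add (listSum l₂)) := by
  induction l₁ with
  | nil => exact (zero_add _).symm
  | cons a l ih => exact (add_congr (refl a) ih).trans (add_assoc _ _ _).symm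

lemma add_listSum_of_mem {a : StExp Act} {l : List (StExp Act)} (h : a ∈ l) :
    SLEq (a.add (listSum l)) (listSum l) := by
  induction l with
  | nil => cases h
  | cons b l ih =>
    rcases List.mem_cons.mp h with rfl | h
    · exact (add_assoc a a _).symm.trans (add_congr (add_idem a) (refl _))
    · exact (add_left_comm a b _).trans (add_congr (refl b) (ih h))

lemma listSum_add_listSum_of_subset {l₁ l₂ : List (StExp Act)} (h : l₂ ⊆ l₁) :
    SLEq ((listSum l₁).add (listSum l₂)) (listSum l₁) := by
  induction l₂ with
  | nil => exact add_zero _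
  | cons a l ih =>
    calc (listSum l₁).add (a.add (listSum l))
      _ ≈ a.add ((listSum l₁).add (listSum l)) := add_left_comm _ _ _
      _ ≈ a.add (listSum l₁) := add_congr (refl a) (ih (List.subset_of_cons_subset h))
      _ ≈ listSum l₁ := add_listSum_of_mem (h List.mem_cons_self)

lemma listSum_congr_of_mem_iff {l₁ l₂ : List (StExp Act)} (h : ∀ x, x ∈ l₁ ↔ x ∈ l₂) :
    SLEq (listSum l₁) (listSum l₂) :=
  calc listSum l₁
    _ ≈ (listSum l₁).add (listSum l₂) :=
      (listSum_add_listSum_of_subset fun x hx => (h x).mpr hx).symm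
    _ ≈ (listSum l₂).add (listSum l₁) := add_comm _ _
    _ ≈ listSum l₂ := listSum_add_listSum_of_subset fun x hx => (h x).mp hx

lemma listSum_map_congr {α : Type} {f g : α → StExp Act} {l : List α}
    (h : ∀ p ∈ l, SLEq (f p) (g p)) : SLEq (listSum (l.map f)) (listSum (l.map g)) := by
  induction l with
  | nil => exact refl _
  | cons a l ih =>
    exact add_congr (h a List.mem_cons_self) (ih fun p hp => h p (List.mem_cons_of_mem _ hp))

lemma listSum_map_mul {α : Type} (f : α → StExp Act) (s : StExp Act) (l : List α) :
    SLEq ((listSum (l.map f)).mul s) (listSum (l.map fun p => (f p).mul s)) := by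
  induction l with
  | nil => exact zero_mul s
  | cons a l ih => exact (right_distrib _ _ s).trans (add_congr (refl _) ih)

lemma listSum_toList_union {α : Type} [DecidableEq α] (f : α → StExp Act) (A B : Finset α) :
    SLEq (listSum ((A ∪ B).toList.map f))
      ((listSum (A.toList.map f)).add (listSum (B.toList.map f))) :=
  (listSum_congr_of_mem_iff fun x => by simp [or_and_right, exists_or]).trans
    (listSum_append _ _)

lemma listSum_toList_image {α β : Type} [DecidableEq β] (f : β → StExp Act) (g : α → β)
    (A : Finset α) :
    SLEq (listSum ((A.image g).toList.map f)) (listSum (A.toList.map (f ∘ g))) :=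
  listSum_congr_of_mem_iff fun x => by simp

end listSum

lemma pairExp_id_mul {Act : Type} (s : StExp Act) (p : Act × Option (StExp Act)) :
    SLEq ((pairExp id p).mul s) (pairExp id (p.1, some (s.seqAfter p.2))) := by
  obtain ⟨a, _ | t⟩ := p
  · exact .refl _
  · exact .mul_assoc _ _ _

open SLEq in
lemma isSolution_synChart_id {Act : Type} [DecidableEq Act] : IsSolution (synChart Act) id := by
  have mul_right {r : StExp Act} (hr : SLEq r (listSum (r.tr.toList.map (pairExp id))))
      (s : StExp Act) : SLEq (r.mul s) (listSum ((r.mul s).tr.toList.map (pairExp id))) :=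
    calc r.mul s
      _ ≈ (listSum (r.tr.toList.map (pairExp id))).mul s := mul_congr hr (refl s)
      _ ≈ listSum (r.tr.toList.map fun p => (pairExp id p).mul s) := listSum_map_mul _ s _
      _ ≈ listSum (r.tr.toList.map fun p => pairExp id (p.1, some (s.seqAfter p.2))) :=
        listSum_map_congr fun p _ => pairExp_id_mul s p
      _ ≈ _ := (listSum_toList_image (pairExp id)
        (fun p : Act × Option (StExp Act) => (p.1, some (s.seqAfter p.2))) r.tr).symm
  intro s
  change SLEq s (listSum (s.tr.toList.map (pairExp id)))
  induction s with
  | zero => rw [StExp.tr, Finset.toList_empty]; exact refl _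
  | act a => rw [StExp.tr, Finset.toList_singleton]; exact (add_zero _).symm
  | add r s ihr ihs => exact (add_congr ihr ihs).trans (listSum_toList_union _ _ _).symm
  | mul r s ihr _ => exact mul_right ihr s
  | star r s ihr ihs =>
    calc r.star s
      _ ≈ (r.mul (r.star s)).add s := star_unfold r s
      _ ≈ _ := add_congr (mul_right ihr _) ihs
      _ ≈ _ := (listSum_toList_union _ _ _).symm

theorem inclusion_is_solution_general {Act : Type} [DecidableEq Act] (s : StExp Act) :
    SLEq s (listSum ((((synChart Act).tr s).toList).map (pairExp id))) :=
  isSolution_synChart_id s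

/-- The inclusion of the subchart `⟨r⟩` of the syntactic chart generated by `r` is a
solution to `⟨r⟩`: every expression `s` reachable from `r`, with
`δ(s) = {(a1,s1),…,(an,sn),(b1,✓),…,(bm,✓)}`, satisfies
`SL* ⊢ s = a1·s1 + ⋯ + an·sn + b1 + ⋯ + bm`. -/
theorem inclusion_is_solution {Act : Type} [DecidableEq Act] (r s : StExp Act)
    (hs : Relation.ReflTransGen ((synChart Act).StepRel) r s) :
    SLEq s (listSum ((((synChart Act).tr s).toList).map (pairExp id))) :=
  inclusion_is_solution_general s
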